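/- (The explicit example is full and not Kähler-holomorphic.) The map φ : ℂ³ → ℂ, φ(q¹,q²,q³) = (q¹ − q³q̄²)(q² + q³q̄¹), is a globally defined harmonic morphism on ℝ⁶ ≅ ℂ³ (Δφ = 0 and Σ_{i=1}^{6}(∂φ/∂x^i)² = 0 everywhere) which moreover is full — for every nonzero v ∈ ℝ⁶ the directional derivative ∂_v φ does not vanish identically — and is not holomorphic with respect to any Kähler structure: there is no linear isometry J : ℝ⁶ → ℝ⁶ with J² = −Id such that dφ_x(Jv) = i·dφ_x(v) for all x ∈ ℝ⁶ and v ∈ ℝ⁶. -/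

import Mathlib

open Complex BigOperators Matrix

/-- Partial derivative in the direction of the real coordinate `x^{2j-1}`,
identifying `ℝ^{2m} ≅ ℂ^m` via `q^j = x^{2j-1} + i x^{2j}`. -/
noncomputable def pdRe {m : ℕ} (f : (Fin m → ℂ) → ℂ) (j : Fin m) (x : Fin m → ℂ) : ℂ :=
  fderiv ℝ f x (Pi.single j 1)

/-- Partial derivative in the direction of the real coordinate `x^{2j}`. -/
noncomputable def pdIm {m : ℕ} (f : (Fin m → ℂ) → ℂ) (j : Fin m) (x : Fin m → ℂ) : ℂ :=
  fderiv ℝ f x (Pi.single j Complex.I)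

/-- Wirtinger derivative `∂f/∂q^j = ½(∂f/∂x^{2j-1} − i ∂f/∂x^{2j})`. -/
noncomputable def wdq {m : ℕ} (f : (Fin m → ℂ) → ℂ) (j : Fin m) (x : Fin m → ℂ) : ℂ :=
  (pdRe f j x - Complex.I * pdIm f j x) / 2

/-- Wirtinger derivative `∂f/∂q̄^j = ½(∂f/∂x^{2j-1} + i ∂f/∂x^{2j})`. -/
noncomputable def wdqbar {m : ℕ} (f : (Fin m → ℂ) → ℂ) (j : Fin m) (x : Fin m → ℂ) : ℂ :=
  (pdRe f j x + Complex.I * pdIm f j x) / 2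

/-- Laplacian `Δf = Σ_{i=1}^{2m} ∂²f/(∂x^i)²`. -/
noncomputable def lap {m : ℕ} (f : (Fin m → ℂ) → ℂ) (x : Fin m → ℂ) : ℂ :=
  ∑ j, (pdRe (fun y => pdRe f j y) j x + pdIm (fun y => pdIm f j y) j x)

/-- The horizontal weak conformality quantity `Σ_{i=1}^{2m} (∂f/∂x^i)²`. -/
noncomputable def hwc {m : ℕ} (f : (Fin m → ℂ) → ℂ) (x : Fin m → ℂ) : ℂ :=
  ∑ j, ((pdRe f j x) ^ 2 + (pdIm f j x) ^ 2)

/-- The explicit map `φ(q¹,q²,q³) = (q¹ − q³q̄²)(q² + q³q̄¹)` on `ℂ³ ≅ ℝ⁶`. -/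
noncomputable def phiSix : (Fin 3 → ℂ) → ℂ :=
  fun q => (q 0 - q 2 * starRingEnd ℂ (q 1)) * (q 1 + q 2 * starRingEnd ℂ (q 0))

/-!
Write `φ = A · B` with `A = q¹ − q³q̄²` and `B = q² + q³q̄¹` (`phiSixFst`, `phiSixSnd`). The
nonlinear terms of `A` and `B` pair variables with distinct indices, so `A` and `B` are harmonic
and `Δφ = 2 ⟨∇A, ∇B⟩`, which cancels. The conformality sum equals `4 Σⱼ ∂φ/∂qʲ · ∂φ/∂q̄ʲ = 4 (B · q³A − A · q³B + 0) = 0`.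

On the hyperplane `q³ = 0` the differential `dφ = B dq¹ + A dq²` is `ℂ`-linear, and no nonzero
direction is killed by it at all three points `(1,0,0)`, `(i,0,0)`, `(0,1,0)`. This gives
fullness, and it forces `J e₁ = i e₁` for any `J` making `φ` holomorphic; but at `(0,1,1)` one
has `dφ(i e₁) = 2i` while `i · dφ(e₁) = 0`.
-/

open ComplexConjugate

lemma fderiv_coord_apply {ι : Type*} (j : ι) (q v : ι → ℂ) :
    fderiv ℝ (fun y : ι → ℂ => y j) q v = v j := by
  simp [(hasFDerivAt_apply j q).fderiv]

lemma fderiv_conj_coord_apply {ι : Type*} [Fintype ι] (j : ι) (q v : ι → ℂ) :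
    fderiv ℝ (fun y : ι → ℂ => conj (y j)) q v = conj (v j) := by
  change fderiv ℝ (fun y : ι → ℂ => star (y j)) q v = star (v j)
  rw [(hasFDerivAt_apply (𝕜 := ℝ) j q).star.fderiv]
  rfl

lemma hwc_eq_four_mul_sum_wdq_mul_wdqbar {m : ℕ} (f : (Fin m → ℂ) → ℂ) (x : Fin m → ℂ) :
    hwc f x = 4 * ∑ j, wdq f j x * wdqbar f j x := by
  simp only [hwc, wdq, wdqbar, Finset.mul_sum]
  refine Finset.sum_congr rfl fun j _ => ?_
  linear_combination (pdIm f j x) ^ 2 * I_sq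

section WirtingerCoefficients

variable {m : ℕ} {f : (Fin m → ℂ) → ℂ} {x a b : Fin m → ℂ}
  (h : ∀ v, fderiv ℝ f x v = ∑ k, (a k * v k + b k * conj (v k)))
include h

lemma fderiv_apply_single_of_eq_sum (j : Fin m) (c : ℂ) :
    fderiv ℝ f x (Pi.single j c) = a j * c + b j * conj c := by
  rw [h, Finset.sum_eq_single j (fun k _ hk => by simp [hk]) (by simp), Pi.single_eq_same]

lemma wdq_eq_of_fderiv_apply_eq_sum (j : Fin m) : wdq f j x = a j := by
  simp only [wdq, pdRe, pdIm, fderiv_apply_single_of_eq_sum h, map_one, conj_I]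
  linear_combination (b j - a j) / 2 * I_sq

lemma wdqbar_eq_of_fderiv_apply_eq_sum (j : Fin m) : wdqbar f j x = b j := by
  simp only [wdqbar, pdRe, pdIm, fderiv_apply_single_of_eq_sum h, map_one, conj_I]
  linear_combination (a j - b j) / 2 * I_sq

end WirtingerCoefficients

noncomputable def phiSixFst (q : Fin 3 → ℂ) : ℂ := q 0 - q 2 * conj (q 1)

noncomputable def phiSixSnd (q : Fin 3 → ℂ) : ℂ := q 1 + q 2 * conj (q 0)

lemma fderiv_phiSix_apply (q v : Fin 3 → ℂ) :
    fderiv ℝ phiSix q v = (v 0 - v 2 * conj (q 1) - q 2 * conj (v 1)) * phiSixSnd q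
      + phiSixFst q * (v 1 + v 2 * conj (q 0) + q 2 * conj (v 0)) := by
  unfold phiSix phiSixFst phiSixSnd
  simp (disch := fun_prop) only [fderiv_fun_sub, fderiv_fun_mul, fderiv_fun_add,
    _root_.add_apply, _root_.sub_apply, _root_.smul_apply, smul_eq_mul,
    fderiv_coord_apply, fderiv_conj_coord_apply]
  ring

lemma fderiv_phiSix_apply_eq_sum (q v : Fin 3 → ℂ) :
    fderiv ℝ phiSix q v =
      ∑ k, (![phiSixSnd q, phiSixFst q, phiSixFst q * conj (q 0) - conj (q 1) * phiSixSnd q] k * v k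
        + ![q 2 * phiSixFst q, -(q 2 * phiSixSnd q), 0] k * conj (v k)) := by
  simp only [fderiv_phiSix_apply, Fin.sum_univ_three, cons_val]
  ring

lemma fderiv_fderiv_phiSix_apply (q v : Fin 3 → ℂ) :
    fderiv ℝ (fun y => fderiv ℝ phiSix y v) q v =
      2 * ((v 0 - v 2 * conj (q 1) - q 2 * conj (v 1)) * (v 1 + v 2 * conj (q 0) + q 2 * conj (v 0))
        - v 2 * conj (v 1) * phiSixSnd q + phiSixFst q * (v 2 * conj (v 0))) := by
  simp only [fderiv_phiSix_apply, phiSixFst, phiSixSnd]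
  simp (disch := fun_prop) only [fderiv_fun_sub, fderiv_fun_mul, fderiv_fun_add,
    _root_.add_apply, _root_.sub_apply, _root_.smul_apply, _root_.zero_apply, smul_eq_mul,
    fderiv_coord_apply, fderiv_conj_coord_apply, fderiv_const_apply]
  ring

lemma lap_phiSix (q : Fin 3 → ℂ) : lap phiSix q = 0 := by
  simp only [lap, pdRe, pdIm, fderiv_fderiv_phiSix_apply, Fin.sum_univ_three, Pi.single_eq_same,
    Pi.single_eq_of_ne, ne_eq, Fin.reduceEq, not_false_eq_true, map_zero, map_one, conj_I]
  linear_combination -2 * conj (q 1) * conj (q 0) * I_sq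

lemma hwc_phiSix (q : Fin 3 → ℂ) : hwc phiSix q = 0 := by
  simp only [hwc_eq_four_mul_sum_wdq_mul_wdqbar, Fin.sum_univ_three,
    wdq_eq_of_fderiv_apply_eq_sum (fderiv_phiSix_apply_eq_sum q),
    wdqbar_eq_of_fderiv_apply_eq_sum (fderiv_phiSix_apply_eq_sum q), cons_val]
  ring

lemma fderiv_phiSix_smul_of_apply_two_eq_zero {x : Fin 3 → ℂ} (hx : x 2 = 0) (c : ℂ)
    (v : Fin 3 → ℂ) : fderiv ℝ phiSix x (c • v) = c * fderiv ℝ phiSix x v := by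
  simp only [fderiv_phiSix_apply, Pi.smul_apply, smul_eq_mul, hx, map_mul]
  ring

lemma eq_zero_of_fderiv_phiSix_apply_eq_zero {v : Fin 3 → ℂ}
    (h₁ : fderiv ℝ phiSix ![1, 0, 0] v = 0) (h₂ : fderiv ℝ phiSix ![I, 0, 0] v = 0)
    (h₃ : fderiv ℝ phiSix ![0, 1, 0] v = 0) : v = 0 := by
  simp only [fderiv_phiSix_apply, phiSixFst, phiSixSnd, cons_val, map_zero, map_one, conj_I]
    at h₁ h₂ h₃
  have hv₂ : v 2 = 0 := by
    have h : (1 - I) * v 2 = 0 := by linear_combination h₂ - I * h₁ + v 2 * I_sq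
    exact (mul_eq_zero.1 h).resolve_left (by simp [Complex.ext_iff])
  have hv₁ : v 1 = 0 := by linear_combination h₁ - hv₂
  have hv₀ : v 0 = 0 := by linear_combination h₃ + hv₂
  ext i
  fin_cases i <;> assumption

lemma fderiv_phiSix_I_smul_single_ne :
    fderiv ℝ phiSix ![0, 1, 1] (I • Pi.single 0 1)
      ≠ I * fderiv ℝ phiSix ![0, 1, 1] (Pi.single 0 1) := by
  simp [fderiv_phiSix_apply, phiSixFst, phiSixSnd]

/-- the map `φ(q¹,q²,q³) = (q¹ − q³q̄²)(q² + q³q̄¹)` is a globally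
defined harmonic morphism on `ℝ⁶ ≅ ℂ³` (`Δφ = 0` and `Σ_{i=1}^6 (∂φ/∂x^i)² = 0`
everywhere) which is full (no nonzero direction annihilates `dφ` identically)
and is not holomorphic with respect to any Kähler structure, i.e. any constant
orthogonal complex structure `J` on `ℝ⁶` (orthogonality expressed by
preservation of the Euclidean inner product). -/
theorem explicit_example_full_not_Kahler :
    (∀ q, lap phiSix q = 0)
    ∧ (∀ q, hwc phiSix q = 0)
    ∧ (∀ v : Fin 3 → ℂ, v ≠ 0 → ∃ q, fderiv ℝ phiSix q v ≠ 0)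
    ∧ ¬ (∃ J : (Fin 3 → ℂ) →ₗ[ℝ] (Fin 3 → ℂ),
          (∀ v w : Fin 3 → ℂ,
            (∑ j, starRingEnd ℂ (J v j) * J w j).re
              = (∑ j, starRingEnd ℂ (v j) * w j).re)
          ∧ (∀ v, J (J v) = -v)
          ∧ (∀ x v, fderiv ℝ phiSix x (J v) = Complex.I * fderiv ℝ phiSix x v)) := by
  refine ⟨lap_phiSix, hwc_phiSix, fun v hv => ?_, ?_⟩
  · by_contra! h
    exact hv (eq_zero_of_fderiv_phiSix_apply_eq_zero (h _) (h _) (h _))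
  · rintro ⟨J, -, -, hol⟩
    have hJ : ∀ x : Fin 3 → ℂ, x 2 = 0 →
        fderiv ℝ phiSix x (J (Pi.single 0 1) - I • Pi.single 0 1) = 0 := fun x hx => by
      rw [map_sub, hol, fderiv_phiSix_smul_of_apply_two_eq_zero hx, sub_self]
    have hJe : J (Pi.single 0 1) = I • Pi.single 0 1 :=
      sub_eq_zero.1 (eq_zero_of_fderiv_phiSix_apply_eq_zero (hJ _ rfl) (hJ _ rfl) (hJ _ rfl))
    exact fderiv_phiSix_I_smul_single_ne (hJe ▸ hol _ _)
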